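/- Let m, n ∈ ℕ, let s : Fin m → (Fin n → ℝ) be a dataset, and for each i let Q_i(t) = (1/m)·|{j : s(j)_i ≤ t}| be the empirical percentile function of the i-th feature. Let φ_i : ℝ → ℝ be strictly monotone increasing for each i, let Q'_i(t) = (1/m)·|{j : φ_i(s(j)_i) ≤ t}| be the percentile functions of the transformed dataset, and define f₁(x, x') = max_{i} |Q_i(x'_i) − Q_i(x_i)| and f₁'(x, x') = max_{i} |Q'_i(x'_i) − Q'_i(x_i)|. Then for all x, x' ∈ ℝⁿ (with n ≥ 1), f₁'((φ_1(x_1), …, φ_n(x_n)), (φ_1(x'_1), …, φ_n(x'_n))) = f₁(x, x'); i.e., the maximum percentile shift cost function is scale invariant. -/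
import Mathlib


theorem max_percentile_shift_scale_invariant (m n : ℕ) (hn : 0 < n)
    (s : Fin m → Fin n → ℝ) (φ : Fin n → ℝ → ℝ) (hφ : ∀ i, StrictMono (φ i))
    (Q Q' : Fin n → ℝ → ℝ)
    (hQ : ∀ i t, Q i t = (1 / (m : ℝ)) * (Finset.univ.filter fun j => s j i ≤ t).card)
    (hQ' : ∀ i t, Q' i t = (1 / (m : ℝ)) * (Finset.univ.filter fun j => φ i (s j i) ≤ t).card)
    (x x' : Fin n → ℝ) :
    Finset.univ.sup' ⟨⟨0, hn⟩, Finset.mem_univ _⟩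
        (fun i => |Q' i (φ i (x' i)) - Q' i (φ i (x i))|) =
      Finset.univ.sup' ⟨⟨0, hn⟩, Finset.mem_univ _⟩
        (fun i => |Q i (x' i) - Q i (x i)|) := by
  have key : ∀ i t, Q' i (φ i t) = Q i t := by
    intro i t
    rw [hQ, hQ']
    have : (Finset.univ.filter fun j => φ i (s j i) ≤ φ i t)
        = Finset.univ.filter fun j => s j i ≤ t := by
      ext j; simp [(hφ i).le_iff_le]
    rw [this]
  apply Finset.sup'_congr _ rfl
  intro i _
  rw [key, key]
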